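/- Let B be a real n×n matrix (n ≥ 2). Then the following are equivalent: (1) for all index sequences k_1,...,k_s with k_{s+1} = k_1, |∏_{i=1}^s b_{k_i k_{i+1}}| ≤ |∏_{i=1}^s b_{k_i k_i}| ≠ 0; (2) there exists a diagonal matrix D with positive diagonal entries such that C = D^{-1} B D satisfies 0 ≠ |c_{ii}| ≥ |c_{ij}| for all i, j. -/

import Mathlib

namespace FPH

variable {n : ℕ}

/-- Chain product of `a` along consecutive pairs of a list of vertices. -/
noncomputable def wp (a : Fin n → Fin n → ℝ) : List (Fin n) → ℝ
  | [] => 1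
  | [_] => 1
  | i :: j :: r => a i j * wp a (j :: r)

@[simp] theorem wp_nil (a : Fin n → Fin n → ℝ) : wp a [] = 1 := rfl
@[simp] theorem wp_one (a : Fin n → Fin n → ℝ) (i : Fin n) : wp a [i] = 1 := rfl
@[simp] theorem wp_cons_cons (a : Fin n → Fin n → ℝ) (i j : Fin n) (r : List (Fin n)) :
    wp a (i :: j :: r) = a i j * wp a (j :: r) := rfl

theorem wp_nonneg {a : Fin n → Fin n → ℝ} (ha : ∀ i j, 0 ≤ a i j) :
    ∀ l, 0 ≤ wp a l
  | [] => zero_le_one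
  | [_] => zero_le_one
  | i :: j :: r => mul_nonneg (ha i j) (wp_nonneg ha (j :: r))

theorem wp_splice (a : Fin n → Fin n → ℝ) :
    ∀ (p : List (Fin n)) (v : Fin n) (q : List (Fin n)),
      wp a (p ++ v :: q) = wp a (p ++ [v]) * wp a (v :: q)
  | [], v, q => by simp
  | [x], v, q => by simp
  | x :: y :: p, v, q => by
    have ih := wp_splice a (y :: p) v q
    simp only [List.cons_append] at ih ⊢
    rw [wp_cons_cons, wp_cons_cons, ih, mul_assoc]

theorem wp_ofFn (a : Fin n → Fin n → ℝ) :
    ∀ (s : ℕ) (k : Fin (s + 1) → Fin n),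
      wp a (List.ofFn k) = ∏ j : Fin s, a (k j.castSucc) (k j.succ) := by
  intro s
  induction s with
  | zero => intro k; simp [List.ofFn_succ]
  | succ s ih =>
    intro k
    have h2 : List.ofFn (fun i : Fin (s + 1) => k i.succ)
        = k 1 :: List.ofFn (fun i : Fin s => k i.succ.succ) := by
      rw [List.ofFn_succ]; simp [Fin.succ_zero_eq_one]
    rw [List.ofFn_succ, h2, wp_cons_cons, ← h2, ih, Fin.prod_univ_succ]
    simp [Fin.succ_castSucc, Fin.succ_zero_eq_one, -Fin.castSucc_succ]

theorem wp_append_last (a : Fin n → Fin n → ℝ) :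
    ∀ (s : ℕ) (k : Fin (s + 1) → Fin n) (v : Fin n),
      wp a (List.ofFn k ++ [v]) = wp a (List.ofFn k) * a (k (Fin.last s)) v := by
  intro s
  induction s with
  | zero => intro k v; simp [List.ofFn_succ, Fin.last]
  | succ s ih =>
    intro k v
    have h2 : List.ofFn (fun i : Fin (s + 1) => k i.succ)
        = k 1 :: List.ofFn (fun i : Fin s => k i.succ.succ) := by
      rw [List.ofFn_succ]; simp [Fin.succ_zero_eq_one]
    rw [List.ofFn_succ]
    simp only [List.cons_append]
    rw [h2, List.cons_append, wp_cons_cons, ← List.cons_append, ← h2, ih, h2,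
      wp_cons_cons, ← h2]
    rw [Fin.succ_last]; ring

theorem wp_closed (a : Fin n → Fin n → ℝ) (s : ℕ) (k : Fin (s + 1) → Fin n) :
    wp a (List.ofFn k ++ [k 0]) = ∏ i : Fin (s + 1), a (k i) (k (i + 1)) := by
  rw [wp_append_last, wp_ofFn, Fin.prod_univ_castSucc]
  congr 1
  · exact Finset.prod_congr rfl fun j _ => by rw [Fin.coeSucc_eq_succ]
  · rw [Fin.last_add_one]

theorem exists_split {l : List (Fin n)} (hl : Fintype.card (Fin n) < l.length) :
    ∃ (p : List (Fin n)) (v : Fin n) (q r : List (Fin n)),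
      l = p ++ v :: (q ++ v :: r) := by
  have hnd : ¬ l.Nodup := fun h => absurd h.length_le_card (by omega)
  obtain ⟨x, hx⟩ := List.exists_duplicate_iff_not_nodup.mpr hnd
  have hsub : List.Sublist [x, x] l := List.duplicate_iff_sublist.mp hx
  obtain ⟨r₁, r₂, rfl, hmem1, hsub2⟩ := List.cons_sublist_iff.mp hsub
  have hmem2 : x ∈ r₂ := List.singleton_sublist.mp hsub2
  obtain ⟨p, p₂, rfl⟩ := List.append_of_mem hmem1
  obtain ⟨q₁, r, rfl⟩ := List.append_of_mem hmem2
  exact ⟨p, x, p₂ ++ q₁, r, by simp⟩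

variable [NeZero n]

instance : Nonempty (Fin n) := ⟨⟨0, Nat.pos_of_ne_zero (NeZero.ne n)⟩⟩

noncomputable def g (a : Fin n → Fin n → ℝ) : ℕ → Fin n → ℝ
  | 0, _ => 1
  | m + 1, i => max 1 (Finset.univ.sup' Finset.univ_nonempty fun j => a i j * g a m j)

theorem g_succ_def (a : Fin n → Fin n → ℝ) (m : ℕ) (i : Fin n) :
    g a (m + 1) i = max 1 (Finset.univ.sup' Finset.univ_nonempty fun j => a i j * g a m j) :=
  rfl

theorem one_le_g (a : Fin n → Fin n → ℝ) : ∀ m i, 1 ≤ g a m i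
  | 0, _ => le_refl 1
  | _ + 1, _ => le_max_left _ _

theorem le_g_succ (a : Fin n → Fin n → ℝ) (m : ℕ) (i j : Fin n) :
    a i j * g a m j ≤ g a (m + 1) i :=
  le_trans (Finset.le_sup' (f := fun j => a i j * g a m j) (Finset.mem_univ j))
    (by rw [g_succ_def]; exact le_max_right _ _)

theorem g_attained (a : Fin n → Fin n → ℝ) :
    ∀ (m : ℕ) (i : Fin n), ∃ t : List (Fin n), wp a (i :: t) = g a m i := by
  intro m
  induction m with
  | zero => intro i; exact ⟨[], rfl⟩
  | succ m ih =>
    intro i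
    rcases max_choice 1 (Finset.univ.sup' Finset.univ_nonempty fun j => a i j * g a m j) with
      h | h
    · exact ⟨[], by rw [g_succ_def, h]; rfl⟩
    · obtain ⟨j, -, hj⟩ := Finset.exists_mem_eq_sup' Finset.univ_nonempty
        (fun j => a i j * g a m j)
      obtain ⟨t, ht⟩ := ih j
      refine ⟨j :: t, ?_⟩
      show a i j * wp a (j :: t) = g a (m + 1) i
      rw [ht, g_succ_def, h, hj]

theorem wp_le_g {a : Fin n → Fin n → ℝ} (ha : ∀ i j, 0 ≤ a i j) :
    ∀ (l : List (Fin n)) (m : ℕ), l.length ≤ m → ∀ i, wp a (i :: l) ≤ g a m i := by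
  intro l
  induction l with
  | nil => intro m _ i; exact one_le_g a m i
  | cons j t ih =>
    intro m hm i
    cases m with
    | zero => simp at hm
    | succ m =>
      have h1 : wp a (i :: j :: t) = a i j * wp a (j :: t) := rfl
      rw [h1]
      refine le_trans ?_ (le_g_succ a m i j)
      exact mul_le_mul_of_nonneg_left (ih m (by simpa using hm) j) (ha i j)

theorem wp_le_g_n {a : Fin n → Fin n → ℝ} (ha : ∀ i j, 0 ≤ a i j)
    (hcyc : ∀ (v : Fin n) (q : List (Fin n)), wp a (v :: (q ++ [v])) ≤ 1) :
    ∀ (N : ℕ) (l : List (Fin n)), l.length ≤ N → ∀ i, wp a (i :: l) ≤ g a n i := by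
  intro N
  induction N with
  | zero =>
    intro l hl i
    have : l = [] := List.length_eq_zero_iff.mp (Nat.le_zero.mp hl)
    subst this
    exact one_le_g a n i
  | succ N ih =>
    intro l hl i
    by_cases hc : l.length ≤ n
    · exact wp_le_g ha l n hc i
    · push_neg at hc
      have hcard : Fintype.card (Fin n) < (i :: l).length := by
        simp only [List.length_cons, Fintype.card_fin]; omega
      obtain ⟨p, v, q, r, he⟩ := exists_split hcard
      have e1 : wp a (i :: l) = wp a (p ++ [v]) * wp a (v :: (q ++ v :: r)) := by
        rw [he]; exact wp_splice a p v (q ++ v :: r)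
      have e2 : wp a (v :: (q ++ v :: r)) = wp a (v :: (q ++ [v])) * wp a (v :: r) := by
        have h := wp_splice a (v :: q) v r
        simpa using h
      have hle : wp a (i :: l) ≤ wp a (p ++ v :: r) := by
        rw [e1, e2, wp_splice a p v r]
        have h1 := hcyc v q
        have n1 := wp_nonneg ha (p ++ [v])
        have n2 := wp_nonneg ha (v :: r)
        have n3 := wp_nonneg ha (v :: (q ++ [v]))
        nlinarith [mul_nonneg n1 n2]
      have hlen : l.length = p.length + q.length + r.length + 1 := by
        have := congrArg List.length he
        simp at this
        omega
      cases p with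
      | nil =>
        simp only [List.nil_append] at he hle
        injection he with h1 h2
        subst h1
        exact le_trans hle (ih r (by omega) i)
      | cons x p' =>
        simp only [List.cons_append] at he hle
        injection he with h1 h2
        subst h1
        simp only [List.length_cons] at hlen
        refine le_trans hle (ih (p' ++ v :: r) ?_ i)
        simp only [List.length_append, List.length_cons]
        omega

end FPH

/-- Fiedler–Pták (1967), Theorem 4.1, equivalence of conditions 1 and 2: the closed-walk
condition on a real matrix `B` is equivalent to the existence of a positive diagonal
similarity scaling `C = D⁻¹ B D` with nonzero diagonal dominating every row in absolute value. -/
theorem fiedler_ptak_hadamard {n : ℕ} (hn : 2 ≤ n) (B : Matrix (Fin n) (Fin n) ℝ) :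
    (∀ (s : ℕ) (k : Fin (s+1) → Fin n),
        |∏ i : Fin (s+1), B (k i) (k (i + 1))| ≤ |∏ i : Fin (s+1), B (k i) (k i)| ∧
          (∏ i : Fin (s+1), B (k i) (k i)) ≠ 0) ↔
      (∃ d : Fin n → ℝ, (∀ i, 0 < d i) ∧
        ∀ i j, ((d i)⁻¹ * B i i * d i) ≠ 0 ∧
          |(d i)⁻¹ * B i j * d j| ≤ |(d i)⁻¹ * B i i * d i|) := by
  haveI : NeZero n := ⟨by omega⟩
  constructor
  · -- (1) → (2)
    intro h1
    set a : Fin n → Fin n → ℝ := fun i j => |B i j| / |B i i| with ha_def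
    have hdiag : ∀ i, B i i ≠ 0 := by
      intro i
      have h := (h1 0 fun _ => i).2
      simpa using h
    have ha : ∀ i j, 0 ≤ a i j := fun i j => div_nonneg (abs_nonneg _) (abs_nonneg _)
    have hcyc : ∀ (v : Fin n) (q : List (Fin n)), FPH.wp a (v :: (q ++ [v])) ≤ 1 := by
      intro v q
      set s := q.length with hs
      have hlen : (v :: q).length = s + 1 := by simp [hs]
      set k : Fin (s + 1) → Fin n := fun i => (v :: q).get (Fin.cast hlen.symm i) with hk
      have hofn : List.ofFn k = v :: q := by
        apply List.ext_get
        · simp [hs]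
        · intro i h1i h2i
          rw [List.get_ofFn]
          rfl
      have hk0 : k 0 = v := rfl
      have hrw : v :: (q ++ [v]) = List.ofFn k ++ [k 0] := by
        rw [hofn, hk0]; simp
      rw [hrw, FPH.wp_closed]
      obtain ⟨hle, hne⟩ := h1 s k
      have habs : (0:ℝ) < |∏ i : Fin (s+1), B (k i) (k i)| := abs_pos.mpr hne
      have hprod : ∏ i : Fin (s+1), a (k i) (k (i + 1))
          = |∏ i : Fin (s+1), B (k i) (k (i + 1))| / |∏ i : Fin (s+1), B (k i) (k i)| := by
        rw [Finset.abs_prod, Finset.abs_prod, ← Finset.prod_div_distrib]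
      rw [hprod, div_le_one habs]
      exact hle
    set d : Fin n → ℝ := fun i => FPH.g a n i with hd
    have dpos : ∀ i, 0 < d i := fun i => lt_of_lt_of_le one_pos (FPH.one_le_g a n i)
    have key : ∀ i j, a i j * d j ≤ d i := by
      intro i j
      have h2 := FPH.le_g_succ a n i j
      obtain ⟨t, ht⟩ := FPH.g_attained a (n + 1) i
      have h3 := FPH.wp_le_g_n ha hcyc t.length t le_rfl i
      rw [ht] at h3
      exact le_trans h2 h3
    refine ⟨d, dpos, fun i j => ⟨?_, ?_⟩⟩
    · exact mul_ne_zero (mul_ne_zero (inv_ne_zero (dpos i).ne') (hdiag i)) (dpos i).ne'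
    · have hBii : (0:ℝ) < |B i i| := abs_pos.mpr (hdiag i)
      have hkey : |B i j| * d j ≤ |B i i| * d i := by
        have h4 := key i j
        calc |B i j| * d j = |B i j| / |B i i| * d j * |B i i| := by field_simp
          _ ≤ d i * |B i i| := mul_le_mul_of_nonneg_right h4 hBii.le
          _ = |B i i| * d i := mul_comm _ _
      simp only [abs_mul, abs_inv, abs_of_pos (dpos i), abs_of_pos (dpos j)]
      rw [mul_assoc, mul_assoc]
      exact mul_le_mul_of_nonneg_left hkey (inv_nonneg.mpr (dpos i).le)
  · -- (2) → (1)
    rintro ⟨d, dpos, hd⟩ s k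
    have hBii : ∀ i, B i i ≠ 0 := by
      intro i h0
      apply (hd i i).1
      rw [h0]; ring
    have hfac : ∀ i j, |B i j| ≤ |B i i| * d i * (d j)⁻¹ := by
      intro i j
      have h := (hd i j).2
      simp only [abs_mul, abs_inv, abs_of_pos (dpos i), abs_of_pos (dpos j)] at h
      rw [mul_assoc, mul_assoc] at h
      have h2 : |B i j| * d j ≤ |B i i| * d i :=
        le_of_mul_le_mul_left h (inv_pos.mpr (dpos i))
      rw [show |B i i| * d i * (d j)⁻¹ = |B i i| * d i / d j from (div_eq_mul_inv _ _).symm,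
        le_div_iff₀ (dpos j)]
      exact h2
    have hP : (0:ℝ) < ∏ i : Fin (s+1), d (k i) := Finset.prod_pos fun i _ => dpos _
    have hre : ∏ i : Fin (s+1), d (k (i + 1)) = ∏ i : Fin (s+1), d (k i) := by
      have h := Equiv.prod_comp (Equiv.addRight (1 : Fin (s+1))) (fun i => d (k i))
      simpa using h
    constructor
    · calc |∏ i : Fin (s+1), B (k i) (k (i + 1))|
          = ∏ i : Fin (s+1), |B (k i) (k (i + 1))| := Finset.abs_prod _ _
        _ ≤ ∏ i : Fin (s+1), (|B (k i) (k i)| * d (k i) * (d (k (i + 1)))⁻¹) :=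
            Finset.prod_le_prod (fun i _ => abs_nonneg _) (fun i _ => hfac _ _)
        _ = (∏ i : Fin (s+1), |B (k i) (k i)|) * (∏ i : Fin (s+1), d (k i)) *
              (∏ i : Fin (s+1), d (k (i + 1)))⁻¹ := by
            rw [Finset.prod_mul_distrib, Finset.prod_mul_distrib, Finset.prod_inv_distrib]
        _ = ∏ i : Fin (s+1), |B (k i) (k i)| := by
            rw [hre, mul_assoc, mul_inv_cancel₀ hP.ne', mul_one]
        _ = |∏ i : Fin (s+1), B (k i) (k i)| := (Finset.abs_prod _ _).symm
    · exact Finset.prod_ne_zero_iff.mpr fun i _ => hBii (k i)
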